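/- Let R_0 be an orthogonal matrix with R_0 R_0^T = I and t ∈ R^n a translation vector. Let w be a unit vector with S_v R_0^T w = -w, and let r = (R_0(2dv) + t)/2. Then for every x ∈ R^n, the midpoint (x + R_0(S_v x + 2dv) + t)/2 lies in the hyperplane through r with normal w, i.e. ⟨(x + R_0(S_v x + 2dv) + t)/2 - r, w⟩ = 0. (Proposition 2 of the paper.) -/
import Mathlib


open Matrix

theorem midpoint_in_plane_after_rigid {n : ℕ} (v w t : Fin n → ℝ) (d : ℝ)
    (R₀ : Matrix (Fin n) (Fin n) ℝ) (hv : v ⬝ᵥ v = 1) (hw : w ⬝ᵥ w = 1)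
    (hR : R₀ * R₀ᵀ = 1)
    (hew : ((((1 : Matrix (Fin n) (Fin n) ℝ) - (2 : ℝ) • Matrix.vecMulVec v v)) * R₀ᵀ).mulVec w = -w)
    (x : Fin n → ℝ) :
    ((1 / 2 : ℝ) • (x + R₀.mulVec ((((1 : Matrix (Fin n) (Fin n) ℝ)
          - (2 : ℝ) • Matrix.vecMulVec v v).mulVec x) + (2 * d) • v) + t)
        - (1 / 2 : ℝ) • (R₀.mulVec ((2 * d) • v) + t)) ⬝ᵥ w = 0 := by
  set S : Matrix (Fin n) (Fin n) ℝ := (1 : Matrix (Fin n) (Fin n) ℝ) - (2 : ℝ) • Matrix.vecMulVec v v with hSdef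
  have hSsymm : Sᵀ = S := by
    have : (Matrix.vecMulVec v v)ᵀ = Matrix.vecMulVec v v := by
      ext i j; simp [Matrix.vecMulVec_apply, mul_comm]
    simp [hSdef, Matrix.transpose_sub, Matrix.transpose_smul, this]
  have key : (R₀.mulVec (S.mulVec x)) ⬝ᵥ w = -(x ⬝ᵥ w) := by
    rw [Matrix.mulVec_mulVec, dotProduct_comm, Matrix.dotProduct_mulVec,
      ← Matrix.mulVec_transpose, Matrix.transpose_mul, hSsymm, hew]
    simp [dotProduct_comm]
  have h1 : ((1 / 2 : ℝ) • (x + R₀.mulVec (S.mulVec x + (2 * d) • v) + t)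
        - (1 / 2 : ℝ) • (R₀.mulVec ((2 * d) • v) + t))
      = (1 / 2 : ℝ) • (x + R₀.mulVec (S.mulVec x)) := by
    rw [Matrix.mulVec_add]
    module
  rw [h1, smul_dotProduct, add_dotProduct, key]
  simp
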